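/- Let k, t be positive integers with t ≤ k and gcd(k, t) = 1. Then the number of orbits of size exactly k of the shift map on t-element subsets of ZMod k equals (1/t)·C(k−1, t−1), and every orbit has size exactly k, so the number of t-element subsets of ZMod k equals k·(1/t)·C(k−1,t−1), i.e., C(k,t). -/

import Mathlib

/-- The shift map on finsets of `ZMod m`. -/
def sh (m : ℕ) (A : Finset (ZMod m)) : Finset (ZMod m) := A.image (· + 1)

/-- The orbit of a finset `A` of `ZMod m` under the shift map (note `(sh m)^[m] = id`). -/
def shOrbit (m : ℕ) [NeZero m] (A : Finset (ZMod m)) : Finset (Finset (ZMod m)) :=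
  (Finset.range m).image (fun i => (sh m)^[i] A)

/-- The number of orbits of size exactly `k` of the shift map on `d`-element subsets
of `ZMod m`. -/
def norb (m d k : ℕ) [NeZero m] : ℕ :=
  (((Finset.univ.filter (fun A : Finset (ZMod m) => A.card = d)).image
      (shOrbit m)).filter (fun O => O.card = k)).card

/-!
Shifting is translation: `(sh m)^[i] A = i +ᵥ A`. If `c +ᵥ A = A`, comparing the sums of the
elements of both sides gives `#A • c = 0`; when `#A = t` is prime to `k`, it is a unit in
`ZMod k`, so `c = 0`. Hence every `t`-subset has minimal period `k` and its orbit has exactly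
`k` elements, and counting the `t`-subsets orbit by orbit gives `N * k = C(k, t)` for the
number `N` of orbits. Finally `k * C(k - 1, t - 1) = C(k, t) * t` turns this into
`C(k - 1, t - 1) = N * t`.
-/

open Finset Function Pointwise

lemma card_nsmul_eq_zero_of_vadd_finset_eq {G : Type*} [AddCommGroup G] [DecidableEq G]
    {A : Finset G} {c : G} (h : c +ᵥ A = A) : #A • c = 0 := by
  have hsum : ∑ x ∈ c +ᵥ A, x = ∑ x ∈ A, x + #A • c := by
    rw [vadd_finset_def, sum_image (AddAction.injective c).injOn]
    simp only [vadd_eq_add]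
    rw [sum_add_distrib, sum_const, add_comm]
  rwa [h, left_eq_add] at hsum

namespace ZMod

lemma eq_zero_of_vadd_finset_eq {k : ℕ} {A : Finset (ZMod k)} (hA : Nat.Coprime #A k)
    {c : ZMod k} (h : c +ᵥ A = A) : c = 0 := by
  have := card_nsmul_eq_zero_of_vadd_finset_eq h
  rwa [nsmul_eq_mul, ((isUnit_iff_coprime _ _).2 hA).mul_right_eq_zero] at this

end ZMod

section Shift

variable {m : ℕ}

lemma sh_iterate (A : Finset (ZMod m)) (i : ℕ) : (sh m)^[i] A = (i : ZMod m) +ᵥ A := by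
  induction i with
  | zero => simp
  | succ i ih =>
    rw [iterate_succ_apply', ih, sh, vadd_finset_def, vadd_finset_def, image_image]
    congr 1
    funext x
    simp only [comp_apply, vadd_eq_add, Nat.cast_succ]
    ring

lemma minimalPeriod_sh [NeZero m] {A : Finset (ZMod m)} (hA : Nat.Coprime #A m) :
    minimalPeriod (sh m) A = m := by
  have hper : IsPeriodicPt (sh m) m A := by
    simp [IsPeriodicPt, IsFixedPt, sh_iterate]
  have hfix : ((minimalPeriod (sh m) A : ℕ) : ZMod m) = 0 :=
    ZMod.eq_zero_of_vadd_finset_eq hA (by rw [← sh_iterate]; exact isPeriodicPt_minimalPeriod _ _)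
  exact Nat.dvd_antisymm hper.minimalPeriod_dvd ((ZMod.natCast_eq_zero_iff _ _).1 hfix)

variable [NeZero m]

lemma coe_shOrbit (A : Finset (ZMod m)) :
    (shOrbit m A : Set (Finset (ZMod m))) = AddAction.orbit (ZMod m) A := by
  ext B
  simp only [shOrbit, coe_image, coe_range, Set.mem_image, Set.mem_Iio, sh_iterate,
    AddAction.mem_orbit_iff]
  constructor
  · rintro ⟨i, -, rfl⟩
    exact ⟨i, rfl⟩
  · rintro ⟨c, rfl⟩
    exact ⟨c.val, ZMod.val_lt c, by rw [ZMod.natCast_zmod_val]⟩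

lemma shOrbit_eq_iff {A B : Finset (ZMod m)} : shOrbit m B = shOrbit m A ↔ B ∈ shOrbit m A := by
  rw [← coe_inj, coe_shOrbit, coe_shOrbit, AddAction.orbit_eq_iff, ← coe_shOrbit, mem_coe]

lemma card_of_mem_shOrbit {A B : Finset (ZMod m)} (hB : B ∈ shOrbit m A) : #B = #A := by
  rw [← mem_coe, coe_shOrbit] at hB
  obtain ⟨c, rfl⟩ := hB
  exact card_vadd_finset c A

lemma card_shOrbit {A : Finset (ZMod m)} (hA : minimalPeriod (sh m) A = m) :
    #(shOrbit m A) = m := by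
  rw [shOrbit, card_image_of_injOn, card_range]
  intro i hi j hj hij
  rw [coe_range, ← hA] at hi hj
  exact iterate_injOn_Iio_minimalPeriod hi hj hij

lemma card_eq_card_image_shOrbit_mul {S : Finset (Finset (ZMod m))}
    (hS : ∀ A ∈ S, ∀ B ∈ shOrbit m A, B ∈ S) (hper : ∀ A ∈ S, minimalPeriod (sh m) A = m) :
    #S = #(S.image (shOrbit m)) * m := by
  rw [card_eq_sum_card_image (shOrbit m) S]
  refine sum_const_nat fun O hO => ?_
  obtain ⟨A, hA, rfl⟩ := mem_image.1 hO
  have hfiber : {B ∈ S | shOrbit m B = shOrbit m A} = shOrbit m A := by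
    ext B
    simp only [mem_filter, shOrbit_eq_iff, and_iff_right_iff_imp]
    exact hS A hA B
  rw [hfiber, card_shOrbit (hper A hA)]

end Shift

lemma Nat.choose_pred_div_eq_of_mul_eq {k t N : ℕ} (hk : 0 < k) (ht : 0 < t)
    (h : N * k = k.choose t) : (k - 1).choose (t - 1) / t = N := by
  have hsucc := Nat.add_one_mul_choose_eq (k - 1) (t - 1)
  rw [Nat.sub_add_cancel hk, Nat.sub_add_cancel ht, ← h] at hsucc
  rw [Nat.eq_of_mul_eq_mul_left hk (hsucc.trans (by ring) : k * _ = k * (N * t)),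
    Nat.mul_div_cancel _ ht]

theorem norb_coprime_general (k t : ℕ) [NeZero k] (ht : 0 < t)
    (hco : Nat.gcd k t = 1) :
    norb k t k = Nat.choose (k - 1) (t - 1) / t ∧
    (∀ A : Finset (ZMod k), A.card = t → Function.minimalPeriod (sh k) A = k) ∧
    k * (Nat.choose (k - 1) (t - 1) / t) = Nat.choose k t := by
  set S := powersetCard t (univ : Finset (ZMod k))
  have hper : ∀ A : Finset (ZMod k), #A = t → minimalPeriod (sh k) A = k := fun A hA =>
    minimalPeriod_sh (hA ▸ Nat.coprime_comm.1 hco)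
  have hclosed : ∀ A ∈ S, ∀ B ∈ shOrbit k A, B ∈ S := fun A hA B hB => by
    rw [mem_powersetCard_univ] at hA ⊢
    rw [card_of_mem_shOrbit hB, hA]
  have hnorb : norb k t k = #(S.image (shOrbit k)) := by
    rw [norb, univ_filter_card_eq, filter_true_of_mem]
    rintro _ hO
    obtain ⟨A, hA, rfl⟩ := mem_image.1 hO
    exact card_shOrbit (hper A (mem_powersetCard_univ.1 hA))
  have hcount : #(S.image (shOrbit k)) * k = k.choose t := by
    rw [← card_eq_card_image_shOrbit_mul hclosed fun A hA => hper A (mem_powersetCard_univ.1 hA),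
      card_powersetCard, card_univ, ZMod.card]
  have hdiv := Nat.choose_pred_div_eq_of_mul_eq (Nat.pos_of_ne_zero (NeZero.ne k)) ht hcount
  exact ⟨hnorb.trans hdiv.symm, hper, by rw [hdiv, mul_comm, hcount]⟩

/-- When `gcd(k,t) = 1`: the number of orbits of size exactly `k` equals
`(1/t)·C(k−1,t−1)`, every orbit has size exactly `k`, and hence the total number of
`t`-subsets is `k·(1/t)·C(k−1,t−1) = C(k,t)`. -/
theorem norb_coprime (k t : ℕ) [NeZero k] (ht : 0 < t) (htk : t ≤ k)
    (hco : Nat.gcd k t = 1) :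
    norb k t k = Nat.choose (k - 1) (t - 1) / t ∧
    (∀ A : Finset (ZMod k), A.card = t → Function.minimalPeriod (sh k) A = k) ∧
    k * (Nat.choose (k - 1) (t - 1) / t) = Nat.choose k t :=
  norb_coprime_general k t ht hco
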